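/- Let α > 1, σ > 0, h > 0, and let W : ℝ^{3×3} → [0,∞) be continuous, frame indifferent, with W(αI) = 0 and C₁·dist²(F, α·SO(3)) ≤ W(F) for all F, for some C₁ > 0. For θ ∈ [α⁻¹,1] and R > 0 let E^{el}_{α,R}(θ) and E^{tot}_{α,R}(θ) = E^{el}_{α,R}(θ) + σR²(1−θ²) be as below, and set E^{tot}_{α,R} := inf_{θ ∈ [α⁻¹,1]} E^{tot}_{α,R}(θ). If θ_R ∈ [α⁻¹,1] (R > 0) is a minimizing family, i.e. E^{tot}_{α,R}(θ_R) − E^{tot}_{α,R} → 0 as R → +∞, then E^{el}_{α,1}(θ_R) → 0 as R → +∞. -/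

import Mathlib

open MeasureTheory Filter Set Matrix
open scoped ENNReal NNReal

noncomputable section

/-- 3×3 real matrices. -/
abbrev Mat3 := Matrix (Fin 3) (Fin 3) ℝ

/-- Euclidean 3-space. -/
abbrev E3 := EuclideanSpace ℝ (Fin 3)

/-- The matrix of a continuous linear map `E3 →L[ℝ] E3` in the standard basis. -/
def matOf (f : E3 →L[ℝ] E3) : Mat3 := fun i j => f (EuclideanSpace.single j 1) i

/-- Frobenius norm of a 3×3 matrix. -/
def frob (M : Mat3) : ℝ := Real.sqrt (∑ i, ∑ j, (M i j)^2)

/-- The special orthogonal group SO(3), as a set of matrices. -/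
def SO3 : Set Mat3 := {Q | Q * Q.transpose = 1 ∧ Q.det = 1}

/-- Frobenius distance from `F` to the well `α·SO(3)`. -/
def distSO (α : ℝ) (F : Mat3) : ℝ := sInf {d : ℝ | ∃ Q ∈ SO3, d = frob (F - α • Q)}

/-- Matrix-vector multiplication, as a map on Euclidean space. -/
def mulVecE (A : Mat3) (x : E3) : E3 := WithLp.toLp 2 (A.mulVec x)

/-- `v` is locally Lipschitz on the (open) set `s`. -/
def LocLipOn (s : Set E3) (v : E3 → E3) : Prop :=
  ∀ x ∈ s, ∃ K : ℝ≥0, ∃ t ∈ nhds x, t ⊆ s ∧ LipschitzOnWith K v t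

/-- The interface square `S_r = (−r/2,r/2)² × {0}`. -/
def Sface (r : ℝ) : Set E3 := {x | |x 0| < r/2 ∧ |x 1| < r/2 ∧ x 2 = 0}

/-- The overlayer `Ω⁺_r = (−r/2,r/2)² × (0,hr)`. -/
def Oplus (h r : ℝ) : Set E3 := {x | |x 0| < r/2 ∧ |x 1| < r/2 ∧ 0 < x 2 ∧ x 2 < h*r}

/-- The admissible class `ADM_{θ,R}` (with `r = θR`): maps that are continuous on the closure
of `Ω⁺_r`, continuously differentiable on `Ω⁺_r`, and equal to `θ⁻¹x` on `S_r`. -/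
def Adm (h θ r : ℝ) (v : E3 → E3) : Prop :=
  ContinuousOn v (closure (Oplus h r)) ∧ ContDiffOn ℝ 1 v (Oplus h r) ∧
    ∀ x ∈ Sface r, v x = θ⁻¹ • x

/-- The elastic energy `E^{el}_{α,R}(θ)`: the infimum of `∫_{Ω⁺_{θR}} W(Dv)` over the
admissible class `ADM_{θ,R}`, as an element of `[0,∞]`. -/
def Eel (W : Mat3 → ℝ≥0∞) (h θ R : ℝ) : ℝ≥0∞ :=
  sInf {e : ℝ≥0∞ | ∃ v : E3 → E3, Adm h θ (θ*R) v ∧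
    e = ∫⁻ x in Oplus h (θ*R), W (matOf (fderiv ℝ v x))}

/-- The total energy `E^{tot}_{α,R}(θ) = E^{el}_{α,R}(θ) + σR²(1−θ²)`, in `[0,∞]`. -/
def Etot (W : Mat3 → ℝ) (h σ θ R : ℝ) : ℝ≥0∞ :=
  Eel (fun F => ENNReal.ofReal (W F)) h θ R + ENNReal.ofReal (σ * R^2 * (1 - θ^2))

/-- The optimal total energy `E^{tot}_{α,R} = inf_{θ ∈ [α⁻¹,1]} E^{tot}_{α,R}(θ)`. -/
def EtotInf (W : Mat3 → ℝ) (h σ α R : ℝ) : ℝ≥0∞ :=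
  sInf {e : ℝ≥0∞ | ∃ θ ∈ Set.Icc α⁻¹ (1:ℝ), e = Etot W h σ θ R}

/-! Rescaling `v ↦ R⁻¹ • v (R • ·)` maps `ADM_{θ,R}` into `ADM_{θ,1}` and divides the energy by
`R³`, so `E^{el}_{α,1}(θ) ≤ R⁻³ E^{el}_{α,R}(θ)`. At `θ = α⁻¹` the map `x ↦ αx` is admissible and
stress free, so `E^{tot}_{α,R} ≤ σR²(1 − α⁻²)`. Along a minimizing family therefore
`E^{el}_{α,1}(θ_R) ≤ R⁻³ (σR² + o(1)) → 0`. -/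

open scoped Pointwise

theorem setLIntegral_comp_smul {E : Type*} [NormedAddCommGroup E] [NormedSpace ℝ E]
    [MeasurableSpace E] [BorelSpace E] [FiniteDimensional ℝ E] (μ : Measure E)
    [μ.IsAddHaarMeasure] (f : E → ℝ≥0∞) {R : ℝ} (hR : R ≠ 0) (s : Set E) :
    ∫⁻ x in s, f (R • x) ∂μ =
      ENNReal.ofReal |(R ^ Module.finrank ℝ E)⁻¹| * ∫⁻ x in R • s, f x ∂μ := by
  let e : E ≃ᵐ E := (Homeomorph.smul (Units.mk0 R hR)).toMeasurableEquiv
  have hs : e ⁻¹' (R • s) = s := by ext x; exact smul_mem_smul_set_iff₀ hR s x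
  calc ∫⁻ x in s, f (R • x) ∂μ = ∫⁻ x, f (e x) ∂μ.restrict (e ⁻¹' (R • s)) := by rw [hs]; rfl
    _ = ∫⁻ y in R • s, f y ∂μ.map e := by
        rw [e.measurableEmbedding.restrict_map, lintegral_map_equiv]
    _ = _ := by
        rw [show ⇑e = (R • ·) from rfl, Measure.map_addHaar_smul μ hR, Measure.restrict_smul,
          lintegral_smul_measure, smul_eq_mul]

theorem fderiv_inv_smul_comp_smul {E F : Type*} [NormedAddCommGroup E] [NormedSpace ℝ E]
    [NormedAddCommGroup F] [NormedSpace ℝ F] (v : E → F) {R : ℝ} (hR : R ≠ 0) (x : E) :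
    fderiv ℝ (fun y => R⁻¹ • v (R • y)) x = fderiv ℝ v (R • x) := by
  rw [show (fun y => R⁻¹ • v (R • y)) = R⁻¹ • (v <| R • ·) from rfl, fderiv_const_smul_field,
    Pi.smul_apply, fderiv_comp_smul, smul_smul, inv_mul_cancel₀ hR, one_smul]

lemma smul_mem_Oplus_iff {h r R : ℝ} (hR : 0 < R) {x : E3} :
    R • x ∈ Oplus h (R * r) ↔ x ∈ Oplus h r := by
  simp only [Oplus, mem_ofPred_eq, PiLp.smul_apply, smul_eq_mul, abs_mul, abs_of_pos hR,
    mul_div_assoc, mul_left_comm h R, mul_lt_mul_iff_right₀ hR, mul_pos_iff_of_pos_left hR]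

lemma smul_mem_Sface_iff {r R : ℝ} (hR : 0 < R) {x : E3} :
    R • x ∈ Sface (R * r) ↔ x ∈ Sface r := by
  simp only [Sface, mem_ofPred_eq, PiLp.smul_apply, smul_eq_mul, abs_mul, abs_of_pos hR,
    mul_div_assoc, mul_lt_mul_iff_right₀ hR, mul_eq_zero, hR.ne', false_or]

lemma smul_Oplus {h r R : ℝ} (hR : 0 < R) : R • Oplus h r = Oplus h (R * r) := by
  ext y
  rw [mem_smul_set_iff_inv_smul_mem₀ hR.ne', ← smul_mem_Oplus_iff hR, smul_inv_smul₀ hR.ne']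

lemma Adm.rescale {h θ r R : ℝ} (hR : 0 < R) {v : E3 → E3} (hv : Adm h θ (R * r) v) :
    Adm h θ r (fun x => R⁻¹ • v (R • x)) := by
  obtain ⟨hcont, hdiff, hbdry⟩ := hv
  have hmaps : MapsTo (R • ·) (Oplus h r) (Oplus h (R * r)) := fun x hx =>
    (smul_mem_Oplus_iff hR).2 hx
  refine ⟨?_, ?_, fun x hx => ?_⟩
  · exact (hcont.comp (continuous_const_smul R).continuousOn
      (hmaps.closure (continuous_const_smul R))).const_smul R⁻¹
  · exact (hdiff.comp (contDiff_id.const_smul R).contDiffOn hmaps).const_smul R⁻¹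
  · dsimp only
    rw [hbdry _ ((smul_mem_Sface_iff hR).2 hx), smul_comm, inv_smul_smul₀ hR.ne']

lemma lintegral_energy_rescale {W' : Mat3 → ℝ≥0∞} {h θ r R : ℝ} (hR : 0 < R) (v : E3 → E3) :
    ∫⁻ x in Oplus h (θ * r), W' (matOf (fderiv ℝ (fun y => R⁻¹ • v (R • y)) x)) =
      ENNReal.ofReal (R ^ 3)⁻¹ * ∫⁻ x in Oplus h (θ * (R * r)), W' (matOf (fderiv ℝ v x)) := by
  simp_rw [fderiv_inv_smul_comp_smul v hR.ne']
  rw [setLIntegral_comp_smul volume (fun y => W' (matOf (fderiv ℝ v y))) hR.ne', smul_Oplus hR,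
    finrank_euclideanSpace_fin, abs_of_pos (by positivity), mul_left_comm]

lemma Eel_le_inv_pow_mul_Eel (W' : Mat3 → ℝ≥0∞) (h θ r : ℝ) {R : ℝ} (hR : 0 < R) :
    Eel W' h θ r ≤ ENNReal.ofReal (R ^ 3)⁻¹ * Eel W' h θ (R * r) := by
  have hc₀ : ENNReal.ofReal (R ^ 3)⁻¹ ≠ 0 := by positivity
  rw [mul_comm, ← ENNReal.div_le_iff_le_mul (.inl hc₀) (.inl ENNReal.ofReal_ne_top)]
  refine le_sInf ?_
  rintro _ ⟨v, hv, rfl⟩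
  rw [ENNReal.div_le_iff_le_mul (.inl hc₀) (.inl ENNReal.ofReal_ne_top), mul_comm,
    ← lintegral_energy_rescale hR]
  exact sInf_le ⟨_, (by rwa [mul_left_comm] at hv : Adm h θ (R * (θ * r)) v).rescale hR, rfl⟩

lemma matOf_smul_id (α : ℝ) : matOf (α • ContinuousLinearMap.id ℝ E3) = α • (1 : Mat3) := by
  ext i j
  simp [matOf, Matrix.one_apply]

lemma Eel_inv_eq_zero {W' : Mat3 → ℝ≥0∞} {α : ℝ} (hW : W' (α • (1 : Mat3)) = 0) (h R : ℝ) :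
    Eel W' h α⁻¹ R = 0 := by
  have hadm : Adm h α⁻¹ (α⁻¹ * R) (α • ·) :=
    ⟨(continuous_const_smul α).continuousOn, (contDiff_id.const_smul α).contDiffOn,
      fun x _ => by rw [inv_inv]⟩
  have henergy : ∀ x, W' (matOf (fderiv ℝ (α • ·) x)) = 0 := fun x => by
    rw [fderiv_fun_const_smul differentiableAt_fun_id, fderiv_fun_id, matOf_smul_id, hW]
  exact le_antisymm (sInf_le ⟨_, hadm, by simp only [henergy, lintegral_zero]⟩) bot_le

lemma EtotInf_le_ofReal {W : Mat3 → ℝ} {α : ℝ} (hα : 1 ≤ α) (hW : W (α • (1 : Mat3)) = 0)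
    (h σ R : ℝ) : EtotInf W h σ α R ≤ ENNReal.ofReal (σ * R ^ 2 * (1 - α⁻¹ ^ 2)) :=
  calc EtotInf W h σ α R ≤ Etot W h σ α⁻¹ R :=
        sInf_le ⟨α⁻¹, ⟨le_rfl, inv_le_one_of_one_le₀ hα⟩, rfl⟩
    _ = _ := by rw [Etot, Eel_inv_eq_zero (by rw [hW, ENNReal.ofReal_zero]), zero_add]

lemma Eel_one_le_div_add_excess {W : Mat3 → ℝ} {α : ℝ} (hα : 1 ≤ α)
    (hW : W (α • (1 : Mat3)) = 0) (h σ θ : ℝ) {R : ℝ} (hR : 0 < R) :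
    Eel (fun F => ENNReal.ofReal (W F)) h θ 1 ≤ ENNReal.ofReal (σ * (1 - α⁻¹ ^ 2) / R) +
      ENNReal.ofReal (R ^ 3)⁻¹ * (Etot W h σ θ R - EtotInf W h σ α R) := by
  have hEel : Eel (fun F => ENNReal.ofReal (W F)) h θ R ≤
      ENNReal.ofReal (σ * R ^ 2 * (1 - α⁻¹ ^ 2)) + (Etot W h σ θ R - EtotInf W h σ α R) :=
    calc _ ≤ Etot W h σ θ R := le_self_add
      _ ≤ EtotInf W h σ α R + (Etot W h σ θ R - EtotInf W h σ α R) := le_add_tsub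
      _ ≤ _ := by gcongr; exact EtotInf_le_ofReal hα hW h σ R
  calc _ ≤ ENNReal.ofReal (R ^ 3)⁻¹ * Eel (fun F => ENNReal.ofReal (W F)) h θ R := by
        simpa using Eel_le_inv_pow_mul_Eel _ h θ 1 hR
    _ ≤ ENNReal.ofReal (R ^ 3)⁻¹ * (ENNReal.ofReal (σ * R ^ 2 * (1 - α⁻¹ ^ 2)) +
          (Etot W h σ θ R - EtotInf W h σ α R)) := by gcongr
    _ = _ := by
        rw [mul_add, ← ENNReal.ofReal_mul (by positivity)]
        congr 2
        field_simp

theorem minimizing_family_elastic_energy_vanishes_general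
    (α σ h : ℝ) (hα : 1 < α) (W : Mat3 → ℝ) (hWwell : W (α • (1 : Mat3)) = 0) (θfam : ℝ → ℝ)
    (hmin : Filter.Tendsto (fun R => Etot W h σ (θfam R) R - EtotInf W h σ α R)
      Filter.atTop (nhds 0)) :
    Filter.Tendsto (fun R => Eel (fun F => ENNReal.ofReal (W F)) h (θfam R) 1)
      Filter.atTop (nhds 0) := by
  have hsurface : Tendsto (fun R => ENNReal.ofReal (σ * (1 - α⁻¹ ^ 2) / R)) atTop (nhds 0) := by
    simpa using ENNReal.tendsto_ofReal (tendsto_const_nhds.div_atTop tendsto_id)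
  have hscale : Tendsto (fun R : ℝ => ENNReal.ofReal (R ^ 3)⁻¹) atTop (nhds 0) := by
    simpa using ENNReal.tendsto_ofReal
      (tendsto_inv_atTop_zero.comp (tendsto_pow_atTop three_ne_zero))
  have hbound := hsurface.add
    (ENNReal.Tendsto.mul hscale (.inr ENNReal.zero_ne_top) hmin (.inr ENNReal.zero_ne_top))
  rw [mul_zero, add_zero] at hbound
  exact tendsto_of_tendsto_of_tendsto_of_le_of_le' tendsto_const_nhds hbound
    (.of_forall fun _ => zero_le) <| (eventually_gt_atTop 0).mono fun R hR =>
      Eel_one_le_div_add_excess hα.le hWwell h σ (θfam R) hR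

/-- along any minimizing family `θ_R` for the total energy, the unit-size
elastic energy `E^{el}_{α,1}(θ_R)` tends to `0` as `R → +∞`. -/
theorem minimizing_family_elastic_energy_vanishes
    (α σ h : ℝ) (hα : 1 < α) (hσ : 0 < σ) (hh : 0 < h)
    (W : Mat3 → ℝ) (hWcont : Continuous W) (hWnonneg : ∀ F, 0 ≤ W F)
    (hframe : ∀ Q ∈ SO3, ∀ F : Mat3, W (Q * F) = W F)
    (hWwell : W (α • (1 : Mat3)) = 0)
    (C₁ : ℝ) (hC₁ : 0 < C₁) (hgrowth : ∀ F : Mat3, C₁ * (distSO α F)^2 ≤ W F)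
    (θfam : ℝ → ℝ) (hmem : ∀ R : ℝ, 0 < R → θfam R ∈ Set.Icc α⁻¹ 1)
    (hmin : Filter.Tendsto (fun R => Etot W h σ (θfam R) R - EtotInf W h σ α R)
      Filter.atTop (nhds 0)) :
    Filter.Tendsto (fun R => Eel (fun F => ENNReal.ofReal (W F)) h (θfam R) 1)
      Filter.atTop (nhds 0) :=
  minimizing_family_elastic_energy_vanishes_general α σ h hα W hWwell θfam hmin
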